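/- arXiv:math/0501198 — 2 statements merged into one kernel-verified Lean document; each statement's English description precedes it below -/
import Mathlib

section
/- Let K be a number field of degree d over ℚ, and let W ⊆ K be a ℚ-linear subspace with dim_ℚ(W) > d/2. If S ⊆ K is a set spanning W over ℚ, then the set of products {αβ : α, β ∈ S} spans K over ℚ. -/
/-!
If `z` is trace-orthogonal to `W * W`, then `Tr((z w') w) = Tr(z (w' w)) = 0` for all `w, w' ∈ W`,
so `z W` lies in the trace-orthogonal complement of `W`. For `z ≠ 0` this complement has dimension
`d - dim W < dim W = dim (z W)`, which is impossible; hence the trace form, being nondegenerate,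
has `(W * W)ᗮ = 0`, i.e. `W * W` is everything.
-/

open NumberField Pointwise

open Module LinearMap

theorem Algebra.le_traceForm_orthogonal_map_mulLeft {R S : Type*} [CommRing R] [CommRing S]
    [Algebra R S] {W : Submodule R S} {z : S}
    (hz : z ∈ (Algebra.traceForm R S).orthogonal (W * W)) :
    W ≤ (Algebra.traceForm R S).orthogonal (W.map (LinearMap.mulLeft R z)) := by
  rintro w hw _ ⟨w', hw', rfl⟩
  have hzero : Algebra.trace R S (w' * w * z) = 0 := hz _ (Submodule.mul_mem_mul hw' hw)
  rw [Algebra.traceForm_apply, LinearMap.mulLeft_apply, ← hzero]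
  congr 1; ring

theorem Submodule.finrank_map_mulLeft {F K : Type*} [Field F] [Field K] [Algebra F K]
    (W : Submodule F K) {z : K} (hz : z ≠ 0) :
    finrank F (W.map (LinearMap.mulLeft F z)) = finrank F W :=
  (W.equivMapOfInjective _ (mul_right_injective₀ hz)).finrank_eq.symm

theorem Submodule.mul_self_eq_top_of_finrank_lt {F K : Type*} [Field F] [Field K] [Algebra F K]
    [FiniteDimensional F K] [Algebra.IsSeparable F K]
    (W : Submodule F K) (hW : finrank F K < 2 * finrank F W) : W * W = ⊤ := by
  have hB : (Algebra.traceForm F K).Nondegenerate := traceForm_nondegenerate F K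
  have hdimW := Submodule.finrank_le W
  have horth : (Algebra.traceForm F K).orthogonal (W * W) = ⊥ := by
    refine (Submodule.eq_bot_iff _).2 fun z hz => by_contra fun hz0 => ?_
    have hle := Submodule.finrank_mono (Algebra.le_traceForm_orthogonal_map_mulLeft hz)
    rw [BilinForm.finrank_orthogonal hB, W.finrank_map_mulLeft hz0] at hle
    omega
  have hcodim := BilinForm.finrank_orthogonal hB (W * W)
  rw [horth, finrank_bot] at hcodim
  have := Submodule.finrank_le (W * W)
  exact Submodule.eq_top_of_finrank_eq (by omega)

/-- If `W` is a `ℚ`-subspace of a number field `K` with `dim W > d/2` and `S` spans `W`,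
then the set of products of two elements of `S` spans `K` over `ℚ`. -/
theorem span_mul_self_eq_top (K : Type) [Field K] [NumberField K]
    (W : Submodule ℚ K) (hW : Module.finrank ℚ K < 2 * Module.finrank ℚ W)
    (S : Set K) (hS : Submodule.span ℚ S = W) :
    Submodule.span ℚ (S * S) = ⊤ := by
  rw [← Submodule.span_mul_span, hS]
  exact W.mul_self_eq_top_of_finrank_lt hW
end

section
/- Let K be a number field of degree d ≥ 200, let r be an integer with d/2 < r, and suppose Λ = ℤγ₁ + … + ℤγ_r where γ₁,…,γ_r ∈ O_K are ℤ-linearly independent. Let W = ℚ-span of Λ, so dim_ℚ W = r. Let s, l be positive integers with binom(l+s,s) ≥ r and let S ⊆ S(l) have size r. Then there exists y = (y₁,…,y_s) ∈ W^s such that the r elements {y₁^{k₁}·…·y_s^{k_s} : (k₁,…,k_s) ∈ S} are ℚ-linearly independent in K. -/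
/-!
Choose embeddings `σ₁, …, σ_r : K → ℂ` for which the matrix `G = (σ_a γ_k)` is invertible; they
exist because the embeddings of a number field separate `ℚ`-independent elements. Writing
`y_i = ∑_k x_{ik} γ_k`, the matrix `(σ_a (y^v))_{a,v}` is the matrix of the monomials `z^v` at the
points `z_a = (σ_a y_i)_i`, and `z = G x` ranges over all of `ℂ^{s×r}`. Distinct monomials are
independent functions, so some choice of points makes this determinant nonzero: it is a nonzero
polynomial in the `x_{ik}`, hence nonzero at a rational point, and a nonsingular matrix
`(σ_a (y^v))` forces the `y^v` to be `ℚ`-independent.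
-/

open NumberField

theorem LinearIndependent.exists_det_eval_ne_zero {F ι n : Type*} [Field F] [Fintype n]
    [DecidableEq n] {w : n → ι → F} (hw : LinearIndependent F w) :
    ∃ j : n → ι, (Matrix.of fun a b => w b (j a)).det ≠ 0 := by
  have hspan : ⊤ ≤ Submodule.span F (Set.range (flip w)) :=
    (span_flip_eq_top_iff_linearIndependent.mpr hw).ge
  let B := Module.Basis.ofSpan hspan
  let e := B.indexEquiv (Pi.basisFun F n)
  have hmem : ∀ a, ∃ x, flip w x = B (e.symm a) :=
    fun a => Module.Basis.ofSpan_subset hspan ⟨_, rfl⟩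
  choose j hj using hmem
  have hrows : (Matrix.of fun a b => w b (j a)).row = B.reindex e := by
    funext a
    rw [Module.Basis.reindex_apply, ← hj]
    rfl
  refine ⟨j, ((Matrix.isUnit_iff_isUnit_det _).mp
    (Matrix.linearIndependent_rows_iff_isUnit.mp ?_)).ne_zero⟩
  rw [hrows]
  exact (B.reindex e).linearIndependent

theorem linearIndependent_fun_prod_pow {R σ ι : Type*} [CommRing R] [IsDomain R] [Infinite R]
    [Fintype σ] {v : ι → σ → ℕ} (hv : Function.Injective v) :
    LinearIndependent R (fun b (x : σ → R) => ∏ i, x i ^ v b i) := by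
  have hmono := (MvPolynomial.basisMonomials σ R).linearIndependent.comp
    (fun b => Finsupp.equivFunOnFinite.symm (v b))
    (Finsupp.equivFunOnFinite.symm.injective.comp hv)
  have hker : LinearMap.ker (MvPolynomial.evalₗ R σ) = ⊥ :=
    LinearMap.ker_eq_bot.mpr fun p q h => MvPolynomial.funext (congrFun h)
  have heval : (fun b (x : σ → R) => ∏ i, x i ^ v b i) = MvPolynomial.evalₗ R σ ∘
      MvPolynomial.basisMonomials σ R ∘ fun b => Finsupp.equivFunOnFinite.symm (v b) := by
    ext b x
    simp [MvPolynomial.evalₗ, MvPolynomial.eval_monomial, Finsupp.prod_fintype]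
  rw [heval]
  exact hmono.map' _ hker

theorem MvPolynomial.exists_eval_algebraMap_ne_zero {R A σ : Type*} [CommRing R] [Infinite R]
    [CommRing A] [IsDomain A] [Algebra R A] [FaithfulSMul R A] {p : MvPolynomial σ A}
    (hp : p ≠ 0) : ∃ x : σ → R, eval (algebraMap R A ∘ x) p ≠ 0 := by
  by_contra! h
  refine hp (funext_set _
    (fun _ => Set.infinite_range_of_injective (FaithfulSMul.algebraMap_injective R A))
    fun x hx => ?_)
  obtain ⟨x, rfl⟩ := Set.range_piMap _ ▸ hx
  exact (h x).trans (map_zero _).symm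

theorem linearIndependent_of_det_apply_ne_zero {F L M n : Type*} [Field F] [Field L]
    [Algebra F L] [AddCommGroup M] [Module F M] [Fintype n] [DecidableEq n]
    (φ : n → M →ₗ[F] L) (m : n → M) (h : (Matrix.of fun a b => φ a (m b)).det ≠ 0) :
    LinearIndependent F m := by
  have hcols := Matrix.linearIndependent_cols_iff_isUnit.mpr
    ((Matrix.isUnit_iff_isUnit_det _).mpr h.isUnit)
  exact (hcols.restrict_scalars' F).of_comp (LinearMap.pi φ)

theorem NumberField.linearIndependent_embeddings_apply {K ι : Type*} [Field K] [NumberField K]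
    {γ : ι → K} (hγ : LinearIndependent ℚ γ) :
    LinearIndependent ℂ (fun b (φ : K →+* ℂ) => φ (γ b)) := by
  have hcoord : LinearIndependent ℂ
      (fun b => algebraMap ℚ ℂ ∘ (integralBasis K).equivFun (γ b)) :=
    linearIndependent_algebraMap_comp_iff.mpr (hγ.map' _ (integralBasis K).equivFun.ker)
  -- `latticeBasis` is a `ℂ`-basis formed by the images of the integral basis under all embeddings.
  have hemb : (fun b (φ : K →+* ℂ) => φ (γ b)) =
      (canonicalEmbedding.latticeBasis K).equivFun.symm ∘
        fun b => algebraMap ℚ ℂ ∘ (integralBasis K).equivFun (γ b) := by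
    ext b φ
    conv_lhs => rw [← (integralBasis K).sum_repr (γ b)]
    simp [Module.Basis.equivFun_symm_apply, canonicalEmbedding.latticeBasis_apply, Rat.smul_def]
  rw [hemb]
  exact hcoord.map' _ (canonicalEmbedding.latticeBasis K).equivFun.symm.ker

def monomialMatrix {R σ n : Type*} [CommSemiring R] [Fintype σ] (v : n → σ → ℕ)
    (z : n → σ → R) : Matrix n n R :=
  Matrix.of fun a b => ∏ i, z a i ^ v b i

theorem RingHom.mapMatrix_monomialMatrix {R S σ n : Type*} [CommSemiring R] [CommSemiring S]
    [Fintype σ] [Fintype n] [DecidableEq n] (f : R →+* S) (v : n → σ → ℕ) (z : n → σ → R) :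
    f.mapMatrix (monomialMatrix v z) = monomialMatrix v fun a i => f (z a i) := by
  ext a b
  simp [monomialMatrix]

open Matrix MvPolynomial in
theorem exists_linearIndependent_prod_pow_sum_smul {K σ n : Type*} [Field K] [CharZero K]
    [Fintype σ] [Fintype n] [DecidableEq n] (j : n → K →+* ℂ) (γ : n → K)
    (hdet : (Matrix.of fun a k => j a (γ k)).det ≠ 0) {v : n → σ → ℕ} (hv : Function.Injective v) :
    ∃ x : σ → n → ℚ, LinearIndependent ℚ (fun b => ∏ i, (∑ k, x i k • γ k) ^ v b i) := by
  set G : Matrix n n ℂ := Matrix.of fun a k => j a (γ k)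
  let P : Matrix n n (MvPolynomial (σ × n) ℂ) :=
    monomialMatrix v fun a i => ∑ k, C (G a k) * X (i, k)
  have heval : ∀ c : σ × n → ℂ,
      eval c P.det = (monomialMatrix v fun a i => (G *ᵥ fun k => c (i, k)) a).det := by
    intro c
    rw [RingHom.map_det, RingHom.mapMatrix_monomialMatrix]
    simp [mulVec, dotProduct]
  have hP : P.det ≠ 0 := by
    obtain ⟨z, hz⟩ := (linearIndependent_fun_prod_pow (R := ℂ) hv).exists_det_eval_ne_zero
    obtain ⟨c, hc⟩ : ∃ c : σ → n → ℂ, ∀ i, G *ᵥ c i = fun a => z a i := by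
      have hsurj := mulVec_surjective_iff_isUnit.mpr ((isUnit_iff_isUnit_det G).mpr hdet.isUnit)
      exact ⟨fun i => (hsurj fun a => z a i).choose, fun i => (hsurj _).choose_spec⟩
    intro h0
    have := heval fun ik => c ik.1 ik.2
    simp only [hc, h0, map_zero] at this
    exact hz this.symm
  obtain ⟨x, hx⟩ := exists_eval_algebraMap_ne_zero (R := ℚ) hP
  refine ⟨fun i k => x (i, k),
    linearIndependent_of_det_apply_ne_zero (fun a => (j a).toRatAlgHom.toLinearMap) _ ?_⟩
  convert hx using 1
  rw [heval]
  congr 1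
  ext a b
  simp [G, monomialMatrix, mulVec, dotProduct, Rat.smul_def, mul_comm]

theorem exists_tuple_monomials_linearIndependent_general (K : Type) [Field K] [NumberField K]
    (r s : ℕ)
    (γ : Fin r → 𝓞 K) (hγ : LinearIndependent ℤ γ)
    (S : Finset (Fin s → ℕ)) (hScard : S.card = r) :
    ∃ y : Fin s → K,
      (∀ i, y i ∈ Submodule.span ℚ (Set.range fun j => (γ j : K))) ∧
      LinearIndependent ℚ (fun v : {v // v ∈ S} => ∏ i, (y i) ^ (v.1 i)) := by
  have hγK : LinearIndependent ℚ fun k => (γ k : K) :=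
    (LinearIndependent.iff_fractionRing (R := ℤ) (K := ℚ)).mp <|
      hγ.map' (algebraMap (𝓞 K) K).toIntAlgHom.toLinearMap
        (LinearMap.ker_eq_bot.mpr RingOfIntegers.coe_injective)
  obtain ⟨j, hj⟩ := (linearIndependent_embeddings_apply hγK).exists_det_eval_ne_zero
  let e : Fin r ≃ S := (S.equivFinOfCardEq hScard).symm
  obtain ⟨x, hx⟩ := exists_linearIndependent_prod_pow_sum_smul j _ hj
    (v := fun b => (e b : Fin s → ℕ)) (Subtype.val_injective.comp e.injective)
  refine ⟨fun i => ∑ k, x i k • (γ k : K), fun i => Submodule.sum_mem _ fun k _ =>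
    Submodule.smul_mem _ _ (Submodule.subset_span ⟨k, rfl⟩), ?_⟩
  exact (linearIndependent_equiv e).mp hx

/-- Ellenberg–Venkatesh dimension counting: given a rank-`r` lattice `Λ = ℤγ₁ + ⋯ + ℤγ_r`
in `𝓞 K` with `r > d/2`, and a set `S` of `r` exponent vectors in `S(l)`, there is
`y ∈ (spanℚ Λ)^s` whose monomials indexed by `S` are `ℚ`-linearly independent. -/
theorem exists_tuple_monomials_linearIndependent (K : Type) [Field K] [NumberField K]
    (d r s l : ℕ) (hd : d = Module.finrank ℚ K) (hd200 : 200 ≤ d) (hr : d < 2 * r)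
    (γ : Fin r → 𝓞 K) (hγ : LinearIndependent ℤ γ)
    (hs : 0 < s) (hl : 0 < l) (hbin : r ≤ (l + s).choose s)
    (S : Finset (Fin s → ℕ)) (hScard : S.card = r) (hSl : ∀ v ∈ S, ∑ i, v i ≤ l) :
    ∃ y : Fin s → K,
      (∀ i, y i ∈ Submodule.span ℚ (Set.range fun j => (γ j : K))) ∧
      LinearIndependent ℚ (fun v : {v // v ∈ S} => ∏ i, (y i) ^ (v.1 i)) :=
  exists_tuple_monomials_linearIndependent_general K r s γ hγ S hScard
end
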